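/- arXiv:0910.5240 — 5 statements merged into one kernel-verified Lean document; each statement's English description precedes it below -/
import Mathlib

section
/- Let λ > 0 be a real number, let (P_n)_{n≥2} satisfy P_2 = 1/λ and P_n = P_{n-1}·(1 − 1/(n−1)) + 1/λ for n ≥ 3, and let (I_n)_{n≥2} satisfy I_2 = 0 and I_n = I_{n-1} + P_{n-1}/(n−1) for n ≥ 3. Then for all n ≥ 3, I_n = (n−2)/(2λ), so the average i_n = I_n/(n−2) equals 1/(2λ). -/
/-! The pendant total `P n = n / (2λ)` is preserved by its recursion, since
`(n - 1)/(2λ) · (n - 2)/(n - 1) + 1/λ = n/(2λ)`. Hence every step of the interior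
recursion adds the same amount `P (n - 1) / (n - 1) = 1/(2λ)`, and `I n = (n - 2)/(2λ)`. -/

lemma cast_succ_sub_one {R : Type*} [Ring R] (n : ℕ) : ((n + 1 : ℕ) : R) - 1 = n := by
  rw [Nat.cast_succ, add_sub_cancel_right]

section YuleRecursions

variable {K : Type*} [Field K] [CharZero K] (c : K) (P I : ℕ → K)

lemma yule_pendant_eq (hP2 : P 2 = c)
    (hPrec : ∀ n : ℕ, 3 ≤ n → P n = P (n - 1) * (1 - 1 / ((n : K) - 1)) + c) :
    ∀ n : ℕ, 2 ≤ n → P n = n * c / 2 := by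
  intro n hn
  induction n, hn using Nat.le_induction with
  | base => rw [hP2]; push_cast; ring
  | succ n hn ih =>
    have hn0 : (n : K) ≠ 0 := Nat.cast_ne_zero.mpr (by omega)
    rw [hPrec (n + 1) (by omega), Nat.add_sub_cancel, cast_succ_sub_one, ih]
    field_simp
    push_cast
    ring

lemma yule_interior_eq (hP : ∀ n : ℕ, 2 ≤ n → P n = n * c / 2) (hI2 : I 2 = 0)
    (hIrec : ∀ n : ℕ, 3 ≤ n → I n = I (n - 1) + P (n - 1) / ((n : K) - 1)) :
    ∀ n : ℕ, 2 ≤ n → I n = (n - 2) * c / 2 := by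
  intro n hn
  induction n, hn using Nat.le_induction with
  | base => rw [hI2]; push_cast; ring
  | succ n hn ih =>
    have hn0 : (n : K) ≠ 0 := Nat.cast_ne_zero.mpr (by omega)
    rw [hIrec (n + 1) (by omega), Nat.add_sub_cancel, cast_succ_sub_one, ih, hP n hn]
    field_simp
    push_cast
    ring

end YuleRecursions

theorem yule_interior_closed_form_general (lam : ℝ) (P I : ℕ → ℝ)
    (hP2 : P 2 = 1 / lam)
    (hPrec : ∀ n : ℕ, 3 ≤ n → P n = P (n - 1) * (1 - 1 / ((n : ℝ) - 1)) + 1 / lam)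
    (hI2 : I 2 = 0)
    (hIrec : ∀ n : ℕ, 3 ≤ n → I n = I (n - 1) + P (n - 1) / ((n : ℝ) - 1)) :
    ∀ n : ℕ, 3 ≤ n →
      I n = ((n : ℝ) - 2) / (2 * lam) ∧ I n / ((n : ℝ) - 2) = 1 / (2 * lam) := by
  intro n hn
  have hIn : I n = ((n : ℝ) - 2) / (2 * lam) := by
    rw [yule_interior_eq _ P I (yule_pendant_eq _ P hP2 hPrec) hI2 hIrec n (by omega)]
    ring
  have hn2 : (n : ℝ) - 2 ≠ 0 := by
    have : (3 : ℝ) ≤ n := by exact_mod_cast hn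
    linarith
  refine ⟨hIn, ?_⟩
  rw [hIn, div_right_comm, div_self hn2]

/-- With `P 2 = 1/λ`, `P n = P (n-1)(1 - 1/(n-1)) + 1/λ`, `I 2 = 0` and
`I n = I (n-1) + P (n-1)/(n-1)` for `n ≥ 3`, one has `I n = (n-2)/(2λ)` and the average
`I n / (n-2) = 1/(2λ)` for all `n ≥ 3`. -/
theorem yule_interior_closed_form (lam : ℝ) (hlam : 0 < lam) (P I : ℕ → ℝ)
    (hP2 : P 2 = 1 / lam)
    (hPrec : ∀ n : ℕ, 3 ≤ n → P n = P (n - 1) * (1 - 1 / ((n : ℝ) - 1)) + 1 / lam)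
    (hI2 : I 2 = 0)
    (hIrec : ∀ n : ℕ, 3 ≤ n → I n = I (n - 1) + P (n - 1) / ((n : ℝ) - 1)) :
    ∀ n : ℕ, 3 ≤ n →
      I n = ((n : ℝ) - 2) / (2 * lam) ∧ I n / ((n : ℝ) - 2) = 1 / (2 * lam) :=
  yule_interior_closed_form_general lam P I hP2 hPrec hI2 hIrec
end

section
/- Let λ > 0, let (P_n)_{n≥2} satisfy P_2 = 1/λ and P_n = P_{n-1}·(1 − 1/(n−1)) + 1/λ for n ≥ 3, and let (I_n)_{n≥2} satisfy I_2 = 0 and I_n = I_{n-1} + P_{n-1}/(n−1) for n ≥ 3. Define p_n = P_n/n and i_n = I_n/(n−2). Then for all n ≥ 3, i_n = p_n = 1/(2λ). -/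
/-! Both recursions are solved in closed form by induction: `P n = n c` and `I n = (n - 2) c`
with `c = 1 / (2λ)`. Indeed `(n - 1) c · (1 - 1/(n - 1)) + 2c = n c` and
`(n - 2) c + (n - 1) c / (n - 1) = (n - 1) c`. -/

namespace Yule

theorem pendant_eq_mul_of_rec (c : ℝ) (P : ℕ → ℝ) (hP2 : P 2 = 2 * c)
    (hPrec : ∀ n : ℕ, 3 ≤ n → P n = P (n - 1) * (1 - 1 / ((n : ℝ) - 1)) + 2 * c) :
    ∀ n : ℕ, 2 ≤ n → P n = n * c := by
  intro n hn
  induction n, hn using Nat.le_induction with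
  | base => rw [hP2]; norm_num
  | succ n hn ih =>
    have hn0 : (n : ℝ) ≠ 0 := by positivity
    rw [hPrec (n + 1) (by omega), Nat.add_sub_cancel, ih]
    push_cast
    rw [add_sub_cancel_right]
    field_simp
    ring

theorem interior_eq_mul_of_rec (c : ℝ) (P I : ℕ → ℝ) (hP : ∀ n : ℕ, 2 ≤ n → P n = n * c)
    (hI2 : I 2 = 0)
    (hIrec : ∀ n : ℕ, 3 ≤ n → I n = I (n - 1) + P (n - 1) / ((n : ℝ) - 1)) :
    ∀ n : ℕ, 2 ≤ n → I n = ((n : ℝ) - 2) * c := by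
  intro n hn
  induction n, hn using Nat.le_induction with
  | base => rw [hI2]; norm_num
  | succ n hn ih =>
    have hn0 : (n : ℝ) ≠ 0 := by positivity
    rw [hIrec (n + 1) (by omega), Nat.add_sub_cancel, ih, hP n hn]
    push_cast
    rw [add_sub_cancel_right]
    field_simp
    ring

end Yule

theorem yule_average_pendant_eq_interior_general (lam : ℝ) (P I : ℕ → ℝ)
    (hP2 : P 2 = 1 / lam)
    (hPrec : ∀ n : ℕ, 3 ≤ n → P n = P (n - 1) * (1 - 1 / ((n : ℝ) - 1)) + 1 / lam)
    (hI2 : I 2 = 0)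
    (hIrec : ∀ n : ℕ, 3 ≤ n → I n = I (n - 1) + P (n - 1) / ((n : ℝ) - 1)) :
    ∀ n : ℕ, 3 ≤ n →
      I n / ((n : ℝ) - 2) = 1 / (2 * lam) ∧ P n / (n : ℝ) = 1 / (2 * lam) := by
  have hlam : 1 / lam = 2 * (1 / (2 * lam)) := by ring
  rw [hlam] at hP2 hPrec
  have hP := Yule.pendant_eq_mul_of_rec _ P hP2 hPrec
  have hI := Yule.interior_eq_mul_of_rec _ P I hP hI2 hIrec
  intro n hn
  have hn2 : (n : ℝ) - 2 ≠ 0 := by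
    have : (3 : ℝ) ≤ n := by exact_mod_cast hn
    linarith
  have hn0 : (n : ℝ) ≠ 0 := by positivity
  rw [hI n (by omega), hP n (by omega)]
  exact ⟨mul_div_cancel_left₀ _ hn2, mul_div_cancel_left₀ _ hn0⟩

/-- Theorem 1 of the paper: with the recursions for the expected pendant
edge-length sum `P` and interior edge-length sum `I`, the averages satisfy
`i_n = p_n = 1/(2λ)` for all `n ≥ 3`. -/
theorem yule_average_pendant_eq_interior (lam : ℝ) (hlam : 0 < lam) (P I : ℕ → ℝ)
    (hP2 : P 2 = 1 / lam)
    (hPrec : ∀ n : ℕ, 3 ≤ n → P n = P (n - 1) * (1 - 1 / ((n : ℝ) - 1)) + 1 / lam)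
    (hI2 : I 2 = 0)
    (hIrec : ∀ n : ℕ, 3 ≤ n → I n = I (n - 1) + P (n - 1) / ((n : ℝ) - 1)) :
    ∀ n : ℕ, 3 ≤ n →
      I n / ((n : ℝ) - 2) = 1 / (2 * lam) ∧ P n / (n : ℝ) = 1 / (2 * lam) :=
  yule_average_pendant_eq_interior_general lam P I hP2 hPrec hI2 hIrec
end

section
/- Let n ≥ 3 be an integer, λ > 0 and t > 0 real numbers, and define the density f(t_2,…,t_{n−1}) = (n−2)!·λ^{n−2}·exp(−λ·Σ_{j=2}^{n−1} t_j) / (1 − e^{−λt})^{n−2} on the region { t ≥ t_2 ≥ ⋯ ≥ t_{n−1} ≥ 0 } ⊆ ℝ^{n−2}. Then ∫ (2t + Σ_{j=2}^{n−1} t_j) · f(t_2,…,t_{n−1}) d(t_2,…,t_{n−1}) = 2t + ((n−2)/λ)·(1 − y(λt)), where y(x) = x e^{−x}/(1 − e^{−x}). -/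
/-!
Every coordinate permutation preserves both the integrand and the cube `[0, t] ^ m`, and the
`m!` regions `{v | Antitone (v ∘ σ)}` tile the cube up to the null set of ties, so the integral
over the ordered simplex is `1 / m!` times the integral over the cube. On the cube the density
factorises into `m` independent exponentials truncated to `[0, t]`, and the total length is
linear in the coordinates, so the cube integral reduces to the one-dimensional integrals of
`λ e^{-λx}` and `x λ e^{-λx}` over `[0, t]`.
-/

open MeasureTheory Real Set Function

theorem measurableSet_setOf_antitone {ι : Type*} [Preorder ι] [Countable ι] :
    MeasurableSet {v : ι → ℝ | Antitone v} := by
  have : {v : ι → ℝ | Antitone v} = ⋂ i, ⋂ j, ⋂ (_ : i ≤ j), {v | v j ≤ v i} := by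
    ext v; simp [Antitone]
  rw [this]
  exact .iInter fun i => .iInter fun j => .iInter fun _ =>
    measurableSet_le (measurable_pi_apply j) (measurable_pi_apply i)

theorem volume_setOf_not_injective {ι : Type*} [Fintype ι] :
    volume {v : ι → ℝ | ¬ Injective v} = 0 := by
  classical
  have hsub : {v : ι → ℝ | ¬ Injective v}
      ⊆ ⋃ i, ⋃ j, ⋃ (_ : i ≠ j), {v | v i = v j} := by
    intro v hv
    obtain ⟨i, j, hv, hij⟩ := Function.not_injective_iff.mp hv
    simp only [mem_iUnion]
    exact ⟨i, j, hij, hv⟩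
  refine measure_mono_null hsub (measure_iUnion_null fun i => measure_iUnion_null fun j =>
    measure_iUnion_null fun hij => ?_)
  let L : (ι → ℝ) →ₗ[ℝ] ℝ :=
    LinearMap.proj (R := ℝ) (φ := fun _ => ℝ) i - LinearMap.proj j
  have hker : {v : ι → ℝ | v i = v j} = LinearMap.ker L := by
    ext v
    simp [L, sub_eq_zero]
  rw [hker]
  refine Measure.addHaar_submodule _ _ fun htop => ?_
  have : Pi.single i 1 ∈ LinearMap.ker L := htop ▸ Submodule.mem_top
  simp [L, hij.symm] at this

section OrderedRegion

variable {m : ℕ} {E : Type*} [NormedAddCommGroup E] [NormedSpace ℝ E]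

theorem iUnion_setOf_antitone_comp_perm :
    ⋃ σ : Equiv.Perm (Fin m), {v : Fin m → ℝ | Antitone (v ∘ σ)} = univ :=
  Set.eq_univ_of_forall fun v => mem_iUnion.mpr
    ⟨Tuple.sort v * Fin.revPerm, by
      rw [mem_ofPred_eq, Equiv.Perm.coe_mul, ← comp_assoc]
      exact (Tuple.monotone_sort v).comp_antitone Fin.rev_anti⟩

theorem pairwise_aedisjoint_setOf_antitone_comp_perm :
    Pairwise (AEDisjoint volume on fun σ : Equiv.Perm (Fin m) =>
      {v : Fin m → ℝ | Antitone (v ∘ σ)}) := by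
  intro σ τ hστ
  refine measure_mono_null ?_ volume_setOf_not_injective
  rintro v ⟨hσ, hτ⟩ hinj
  exact hστ (Equiv.ext fun i => hinj (congrFun (Tuple.unique_antitone hσ hτ) i))

theorem setIntegral_setOf_antitone_comp_perm {G : (Fin m → ℝ) → E} (σ : Equiv.Perm (Fin m))
    (hG : ∀ v, G (v ∘ σ) = G v) :
    ∫ v in {v | Antitone (v ∘ σ)}, G v = ∫ v in {v | Antitone v}, G v := by
  have hmp := volume_measurePreserving_piCongrLeft (fun _ : Fin m => ℝ) σ.symm
  set e := MeasurableEquiv.piCongrLeft (fun _ : Fin m => ℝ) σ.symm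
  have he : ∀ v, e v = v ∘ σ := fun v => by
    funext i; simp [e, MeasurableEquiv.piCongrLeft, Equiv.piCongrLeft]
  have hpre : e ⁻¹' {v | Antitone v} = {v | Antitone (v ∘ σ)} := by
    ext v; simp [he]
  rw [← hpre, ← hmp.setIntegral_preimage_emb e.measurableEmbedding G {v | Antitone v}]
  simp only [he, hG]

theorem integral_eq_factorial_smul_setIntegral_antitone {G : (Fin m → ℝ) → E}
    (hG : Integrable G) (hsymm : ∀ (σ : Equiv.Perm (Fin m)) v, G (v ∘ σ) = G v) :
    ∫ v, G v = m.factorial • ∫ v in {v | Antitone v}, G v := by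
  have hmeas (σ : Equiv.Perm (Fin m)) :
      NullMeasurableSet {v : Fin m → ℝ | Antitone (v ∘ σ)} :=
    (measurableSet_setOf_antitone.preimage (measurable_pi_lambda _ fun i =>
      measurable_pi_apply (σ i))).nullMeasurableSet
  calc ∫ v, G v = ∫ v in ⋃ σ : Equiv.Perm (Fin m), {v | Antitone (v ∘ σ)}, G v := by
        rw [iUnion_setOf_antitone_comp_perm, Measure.restrict_univ]
    _ = ∑ σ : Equiv.Perm (Fin m), ∫ v in {v | Antitone (v ∘ σ)}, G v := by
        rw [integral_iUnion_ae hmeas pairwise_aedisjoint_setOf_antitone_comp_perm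
          hG.integrableOn, tsum_fintype]
    _ = m.factorial • ∫ v in {v | Antitone v}, G v := by
        simp only [setIntegral_setOf_antitone_comp_perm _ (hsymm _), Finset.sum_const,
          Finset.card_univ, Fintype.card_perm, Fintype.card_fin]

theorem setIntegral_univ_pi_eq_factorial_smul {s : Set ℝ} (hs : MeasurableSet s)
    {H : (Fin m → ℝ) → E} (hH : IntegrableOn H (univ.pi fun _ => s))
    (hsymm : ∀ (σ : Equiv.Perm (Fin m)) v, H (v ∘ σ) = H v) :
    ∫ v in univ.pi fun _ => s, H v
      = m.factorial • ∫ v in {v | Antitone v} ∩ univ.pi fun _ => s, H v := by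
  have hcube : MeasurableSet (univ.pi fun _ : Fin m => s) := .univ_pi fun _ => hs
  rw [← integral_indicator hcube, ← setIntegral_indicator hcube]
  refine integral_eq_factorial_smul_setIntegral_antitone ((integrable_indicator_iff hcube).2 hH)
    fun σ v => ?_
  classical
  simp only [indicator_apply, mem_univ_pi, comp_apply, hsymm,
    σ.forall_congr_right (q := fun i => v i ∈ s)]

end OrderedRegion

section Cube

variable {ι : Type*} [Fintype ι]

theorem integrableOn_univ_pi_prod {s : ι → Set ℝ} {f : ι → ℝ → ℝ}
    (hf : ∀ i, IntegrableOn (f i) (s i)) :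
    IntegrableOn (fun v => ∏ i, f i (v i)) (univ.pi s) := by
  rw [IntegrableOn, volume_pi, Measure.restrict_pi_pi]
  exact Integrable.fintype_prod hf

theorem setIntegral_univ_pi_prod (s : ι → Set ℝ) (f : ι → ℝ → ℝ) :
    ∫ v in univ.pi s, ∏ i, f i (v i) = ∏ i, ∫ x in s i, f i x := by
  rw [volume_pi, Measure.restrict_pi_pi, integral_fintype_prod_eq_prod]

variable {s : Set ℝ} {g : ℝ → ℝ}

theorem prod_update_apply_eq_mul_prod [DecidableEq ι] (v : ι → ℝ) (j : ι) :
    ∏ i, update (fun _ => g) j (fun x => x * g x) i (v i) = v j * ∏ i, g (v i) := by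
  rw [Fintype.prod_eq_mul_prod_compl j, update_self,
    Finset.prod_congr rfl fun i hi => by rw [update_of_ne (by simpa using hi)],
    Fintype.prod_eq_mul_prod_compl j fun i => g (v i), mul_assoc]

theorem integrableOn_univ_pi_apply_mul_prod (hg : IntegrableOn g s)
    (hxg : IntegrableOn (fun x => x * g x) s) (j : ι) :
    IntegrableOn (fun v => v j * ∏ i, g (v i)) (univ.pi fun _ => s) := by
  classical
  simp_rw [← prod_update_apply_eq_mul_prod]
  refine integrableOn_univ_pi_prod fun i => ?_
  rcases eq_or_ne i j with rfl | hi
  · simpa using hxg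
  · simpa [hi] using hg

theorem setIntegral_univ_pi_apply_mul_prod (j : ι) :
    ∫ v in univ.pi fun _ => s, v j * ∏ i, g (v i)
      = (∫ x in s, x * g x) * (∫ x in s, g x) ^ (Fintype.card ι - 1) := by
  classical
  simp_rw [← prod_update_apply_eq_mul_prod, setIntegral_univ_pi_prod]
  rw [Fintype.prod_eq_mul_prod_compl j, update_self,
    Finset.prod_congr rfl fun i hi => by rw [update_of_ne (by simpa using hi)],
    Finset.prod_const, Finset.card_compl, Finset.card_singleton]

theorem setIntegral_univ_pi_const_add_sum_mul_prod (a : ℝ) (hg : IntegrableOn g s)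
    (hxg : IntegrableOn (fun x => x * g x) s) :
    ∫ v in univ.pi fun _ : ι => s, (a + ∑ j, v j) * ∏ i, g (v i)
      = a * (∫ x in s, g x) ^ Fintype.card ι
        + Fintype.card ι * (∫ x in s, x * g x) * (∫ x in s, g x) ^ (Fintype.card ι - 1) := by
  have hsum : IntegrableOn (fun v => ∑ j, v j * ∏ i, g (v i)) (univ.pi fun _ : ι => s) :=
    integrable_finsetSum _ fun j _ => integrableOn_univ_pi_apply_mul_prod hg hxg j
  simp_rw [add_mul, Finset.sum_mul]
  rw [integral_add ((integrableOn_univ_pi_prod fun _ => hg).const_mul a) hsum,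
    integral_const_mul, setIntegral_univ_pi_prod _ fun _ => g,
    integral_finsetSum _ fun j _ => integrableOn_univ_pi_apply_mul_prod hg hxg j]
  simp only [setIntegral_univ_pi_apply_mul_prod, Finset.prod_const, Finset.sum_const,
    Finset.card_univ, nsmul_eq_mul, mul_assoc]

end Cube

theorem integral_Icc_mul_exp_neg_mul (lam : ℝ) {t : ℝ} (ht : 0 ≤ t) :
    ∫ x in Icc 0 t, lam * exp (-(lam * x)) = 1 - exp (-(lam * t)) := by
  have hderiv (x : ℝ) : HasDerivAt (fun y => -exp (-(lam * y))) (lam * exp (-(lam * x))) x :=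
    (((hasDerivAt_id x).const_mul lam).fun_neg.exp.fun_neg).congr_deriv (by simp [mul_comm])
  rw [integral_Icc_eq_integral_Ioc, ← intervalIntegral.integral_of_le ht,
    intervalIntegral.integral_eq_sub_of_hasDerivAt (fun x _ => hderiv x)
      (Continuous.intervalIntegrable (by fun_prop) _ _)]
  simp only [mul_zero, neg_zero, exp_zero]
  ring

theorem integral_Icc_mul_mul_exp_neg_mul {lam : ℝ} (hlam : lam ≠ 0) {t : ℝ} (ht : 0 ≤ t) :
    ∫ x in Icc 0 t, x * (lam * exp (-(lam * x)))
      = (1 - exp (-(lam * t))) / lam - t * exp (-(lam * t)) := by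
  have hderiv (x : ℝ) : HasDerivAt (fun y => -(y + 1 / lam) * exp (-(lam * y)))
      (x * (lam * exp (-(lam * x)))) x := by
    refine (((hasDerivAt_id x).add_const (1 / lam)).fun_neg.fun_mul
      ((hasDerivAt_id x).const_mul lam).fun_neg.exp).congr_deriv ?_
    simp only [id]
    field_simp
    ring
  rw [integral_Icc_eq_integral_Ioc, ← intervalIntegral.integral_of_le ht,
    intervalIntegral.integral_eq_sub_of_hasDerivAt (fun x _ => hderiv x)
      (Continuous.intervalIntegrable (by fun_prop) _ _)]
  simp only [mul_zero, neg_zero, exp_zero]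
  field_simp
  ring

theorem prod_mul_exp_neg_mul {ι : Type*} [Fintype ι] (lam : ℝ) (v : ι → ℝ) :
    ∏ j, lam * exp (-(lam * v j)) = lam ^ Fintype.card ι * exp (-(lam * ∑ j, v j)) := by
  rw [Finset.prod_mul_distrib, Finset.prod_const, Finset.card_univ, ← exp_sum, Finset.mul_sum,
    Finset.sum_neg_distrib]

theorem setIntegral_univ_pi_Icc_add_sum_mul_prod_exp {ι : Type*} [Fintype ι]
    (a : ℝ) {lam : ℝ} (hlam : lam ≠ 0) {t : ℝ} (ht : 0 ≤ t) :
    ∫ v in univ.pi fun _ : ι => Icc 0 t, (a + ∑ j, v j) * ∏ j, lam * exp (-(lam * v j))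
      = a * (1 - exp (-(lam * t))) ^ Fintype.card ι + Fintype.card ι *
        ((1 - exp (-(lam * t))) / lam - t * exp (-(lam * t))) *
          (1 - exp (-(lam * t))) ^ (Fintype.card ι - 1) := by
  have hg : IntegrableOn (fun x => lam * exp (-(lam * x))) (Icc 0 t) :=
    Continuous.integrableOn_Icc (by fun_prop)
  have hxg : IntegrableOn (fun x => x * (lam * exp (-(lam * x)))) (Icc 0 t) :=
    Continuous.integrableOn_Icc (by fun_prop)
  rw [setIntegral_univ_pi_const_add_sum_mul_prod a hg hxg, integral_Icc_mul_exp_neg_mul lam ht,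
    integral_Icc_mul_mul_exp_neg_mul hlam ht]

theorem setIntegral_antitone_Icc_totalLength_mul_density {m : ℕ} (hm : 1 ≤ m) {lam t : ℝ}
    (hlam : 0 < lam) (ht : 0 < t) :
    (∫ v in {v : Fin m → ℝ |
        (∀ i j : Fin m, i ≤ j → v j ≤ v i) ∧ (∀ i, 0 ≤ v i) ∧ ∀ i, v i ≤ t},
      (2 * t + ∑ j, v j) *
        ((m.factorial : ℝ) * lam ^ m * exp (-lam * ∑ j, v j) /
          (1 - exp (-lam * t)) ^ m)) =
    2 * t + (m : ℝ) / lam *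
      (1 - lam * t * exp (-(lam * t)) / (1 - exp (-(lam * t)))) := by
  set H : (Fin m → ℝ) → ℝ := fun v => (2 * t + ∑ j, v j) * ∏ j, lam * exp (-(lam * v j))
  have hregion : {v : Fin m → ℝ |
      (∀ i j : Fin m, i ≤ j → v j ≤ v i) ∧ (∀ i, 0 ≤ v i) ∧ ∀ i, v i ≤ t}
      = {v | Antitone v} ∩ univ.pi fun _ => Icc 0 t := by
    ext v
    simp [Antitone, Pi.le_def]
  have hintegrand (v : Fin m → ℝ) : (2 * t + ∑ j, v j) *
      ((m.factorial : ℝ) * lam ^ m * exp (-lam * ∑ j, v j) / (1 - exp (-lam * t)) ^ m)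
      = m.factorial / (1 - exp (-(lam * t))) ^ m * H v := by
    simp only [H, prod_mul_exp_neg_mul, Fintype.card_fin, neg_mul]
    ring
  have hH : IntegrableOn H (univ.pi fun _ => Icc 0 t) :=
    ContinuousOn.integrableOn_compact (isCompact_univ_pi fun _ => isCompact_Icc)
      (by fun_prop)
  have hsymm (σ : Equiv.Perm (Fin m)) (v : Fin m → ℝ) : H (v ∘ σ) = H v := by
    simp only [H, comp_apply, Equiv.sum_comp σ v,
      Equiv.prod_comp σ fun j => lam * exp (-(lam * v j))]
  calc _ = m.factorial / (1 - exp (-(lam * t))) ^ m *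
        ∫ v in {v | Antitone v} ∩ univ.pi fun _ => Icc 0 t, H v := by
        simp_rw [hregion, hintegrand, integral_const_mul]
    _ = (∫ v in univ.pi fun _ => Icc 0 t, H v) / (1 - exp (-(lam * t))) ^ m := by
        rw [setIntegral_univ_pi_eq_factorial_smul measurableSet_Icc hH hsymm, nsmul_eq_mul]
        field_simp
    _ = _ := by
        rw [setIntegral_univ_pi_Icc_add_sum_mul_prod_exp _ hlam.ne' ht.le, Fintype.card_fin]
        obtain ⟨k, rfl⟩ := Nat.exists_eq_add_of_le' hm
        simp only [Nat.add_sub_cancel, pow_succ]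
        have hD : 0 < 1 - exp (-(lam * t)) :=
          sub_pos.2 (exp_lt_one_iff.2 (neg_neg_of_pos (mul_pos hlam ht)))
        -- otherwise `field_simp` rewrites the exponent and no longer recognises `hD`
        generalize exp (-(lam * t)) = e at hD ⊢
        have := hD.ne'
        field_simp

/-- Theorem 2 of the paper: the expected total branch length of a Yule tree
with `n` leaves and depth `t`, i.e. the integral of `(2t + Σ t_j)` against the joint density
of the speciation times over the ordered simplex, equals `2t + ((n-2)/λ)(1 - y(λt))`
where `y(x) = x e^{-x}/(1 - e^{-x})`. -/
theorem yule_expected_total_length (n : ℕ) (hn : 3 ≤ n) (lam t : ℝ) (hlam : 0 < lam)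
    (ht : 0 < t) :
    (∫ v in {v : Fin (n - 2) → ℝ |
        (∀ i j : Fin (n - 2), i ≤ j → v j ≤ v i) ∧ (∀ i, 0 ≤ v i) ∧ ∀ i, v i ≤ t},
      (2 * t + ∑ j, v j) *
        ((Nat.factorial (n - 2) : ℝ) * lam ^ (n - 2) * Real.exp (-lam * ∑ j, v j) /
          (1 - Real.exp (-lam * t)) ^ (n - 2))) =
    2 * t + ((n : ℝ) - 2) / lam *
      (1 - lam * t * Real.exp (-(lam * t)) / (1 - Real.exp (-(lam * t)))) := by
  rw [setIntegral_antitone_Icc_totalLength_mul_density (by omega) hlam ht,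
    Nat.cast_sub (by omega : 2 ≤ n), Nat.cast_ofNat]
end

section
/- Let n ≥ 3 be an integer and t > 0 a real number. The function λ ↦ e^{−2λt}·(1 − e^{−λt})^{n−2} on (0, ∞) attains its maximum value uniquely at λ = ln(n/2)/t. -/
/-!
Substituting `u = e^{-λt}`, an order-reversing bijection of `(0, ∞)` onto `(0, 1)`, turns the
function into the binomial likelihood `u² (1 - u)^{n-2}`. Strict weighted AM–GM applied to
`u / w` and `(1 - u) / (1 - w)` with weights `w = 2/n` and `1 - w` shows that this is uniquely
maximised at `u = 2/n`, and `e^{-λt} = 2/n` exactly when `λ = ln(n/2)/t`.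
-/

open Real

theorem rpow_mul_one_sub_rpow_lt {w u : ℝ} (hw0 : 0 < w) (hw1 : w < 1) (hu0 : 0 ≤ u) (hu1 : u ≤ 1)
    (hne : u ≠ w) :
    u ^ w * (1 - u) ^ (1 - w) < w ^ w * (1 - w) ^ (1 - w) := by
  have hw1' : 0 < 1 - w := sub_pos.2 hw1
  have hsep : u / w ≠ (1 - u) / (1 - w) := by
    rw [Ne, div_eq_div_iff hw0.ne' hw1'.ne']
    contrapose! hne
    linarith
  have amgm := (geom_mean_lt_arith_mean2_weighted_iff_of_pos hw0 hw1' (by positivity)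
    (div_nonneg (sub_nonneg.2 hu1) hw1'.le) (add_sub_cancel w 1)).2 hsep
  rw [mul_div_cancel₀ _ hw0.ne', mul_div_cancel₀ _ hw1'.ne', add_sub_cancel,
    div_rpow hu0 hw0.le, div_rpow (sub_nonneg.2 hu1) hw1'.le, div_mul_div_comm,
    div_lt_one (by positivity)] at amgm
  exact amgm

theorem pow_mul_one_sub_pow_lt {a n : ℕ} (ha : 0 < a) (han : a < n) {u : ℝ} (hu0 : 0 ≤ u)
    (hu1 : u ≤ 1) (hne : u ≠ a / n) :
    u ^ a * (1 - u) ^ (n - a) < (a / n) ^ a * (1 - a / n) ^ (n - a) := by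
  have hn : (0 : ℝ) < n := by exact_mod_cast ha.trans han
  have hw0 : (0 : ℝ) < a / n := by positivity
  have hw1 : (a : ℝ) / n < 1 := (div_lt_one hn).2 (by exact_mod_cast han)
  have hpow : ∀ x y : ℝ, 0 ≤ x → 0 ≤ y →
      (x ^ ((a : ℝ) / n) * y ^ (1 - (a : ℝ) / n)) ^ (n : ℝ) = x ^ a * y ^ (n - a) := by
    intro x y hx hy
    rw [mul_rpow (by positivity) (by positivity), ← rpow_mul hx, ← rpow_mul hy,
      div_mul_cancel₀ _ hn.ne', sub_mul, div_mul_cancel₀ _ hn.ne', one_mul, ← Nat.cast_sub han.le,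
      rpow_natCast, rpow_natCast]
  have key := rpow_lt_rpow (by positivity) (rpow_mul_one_sub_rpow_lt hw0 hw1 hu0 hu1 hne) hn
  rwa [hpow _ _ hu0 (sub_nonneg.2 hu1), hpow _ _ hw0.le (sub_nonneg.2 hw1.le)] at key

theorem exp_neg_log_div_mul {x t : ℝ} (hx : 0 < x) (ht : t ≠ 0) :
    exp (-(log x / t) * t) = x⁻¹ := by
  rw [neg_mul, div_mul_cancel₀ _ ht, exp_neg, exp_log hx]

theorem exp_neg_two_mul_mul (l t : ℝ) : exp (-2 * l * t) = exp (-l * t) ^ 2 := by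
  rw [← exp_nat_mul]; ring_nf

/-- for `n ≥ 3` and `t > 0`, the function
`λ ↦ e^{-2λt}(1 - e^{-λt})^{n-2}` on `(0,∞)` attains its maximum value uniquely at
`λ = ln(n/2)/t`. -/
theorem yule_ML_unique_max (n : ℕ) (hn : 3 ≤ n) (t : ℝ) (ht : 0 < t) :
    Real.log ((n : ℝ) / 2) / t ∈ Set.Ioi (0 : ℝ) ∧
    ∀ l ∈ Set.Ioi (0 : ℝ), l ≠ Real.log ((n : ℝ) / 2) / t →
      Real.exp (-2 * l * t) * (1 - Real.exp (-l * t)) ^ (n - 2) <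
        Real.exp (-2 * (Real.log ((n : ℝ) / 2) / t) * t) *
          (1 - Real.exp (-(Real.log ((n : ℝ) / 2) / t) * t)) ^ (n - 2) := by
  have hn2 : (2 : ℝ) < n := by exact_mod_cast hn
  have hopt : exp (-(log ((n : ℝ) / 2) / t) * t) = ((2 : ℕ) : ℝ) / n := by
    rw [exp_neg_log_div_mul (by positivity) ht.ne', inv_div, Nat.cast_ofNat]
  refine ⟨div_pos (log_pos ((one_lt_div two_pos).2 hn2)) ht, fun l hl hne => ?_⟩
  have hinj : exp (-l * t) ≠ ((2 : ℕ) : ℝ) / n := by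
    rw [← hopt, Ne, exp_eq_exp, mul_left_inj' ht.ne', neg_inj]
    exact hne
  rw [exp_neg_two_mul_mul, exp_neg_two_mul_mul, hopt]
  exact pow_mul_one_sub_pow_lt two_pos hn (exp_pos _).le
    (exp_le_one_iff.2 (by nlinarith [Set.mem_Ioi.1 hl])) hinj
end

section
/- Let n ≥ 3 be an integer, t > 0 real, λ = ln(n/2)/t, and L = 2t + ((n−2)/λ)·(1 − y(λt)) with y(x) = x e^{−x}/(1 − e^{−x}). Then λ = (n−2)/L. -/
/-- Corollary 3(ii): with `λ = ln(n/2)/t` and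
`L = 2t + ((n-2)/λ)(1 - y(λt))`, one has `λ = (n-2)/L`. -/
theorem yule_ML_eq_ratio (n : ℕ) (hn : 3 ≤ n) (t : ℝ) (ht : 0 < t)
    (lam L : ℝ) (hlam : lam = Real.log ((n : ℝ) / 2) / t)
    (hL : L = 2 * t + ((n : ℝ) - 2) / lam *
        (1 - lam * t * Real.exp (-(lam * t)) / (1 - Real.exp (-(lam * t))))) :
    lam = ((n : ℝ) - 2) / L := by
  have hn3 : (3 : ℝ) ≤ (n : ℝ) := by exact_mod_cast hn
  have hnpos : (0 : ℝ) < (n : ℝ) := by linarith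
  have h1 : (1 : ℝ) < (n : ℝ) / 2 := by linarith
  have hlog : 0 < Real.log ((n : ℝ) / 2) := Real.log_pos h1
  have hlampos : 0 < lam := by
    rw [hlam]; exact div_pos hlog ht
  have hlt : lam * t = Real.log ((n : ℝ) / 2) := by
    rw [hlam]; field_simp
  have hexp : Real.exp (-(lam * t)) = 2 / (n : ℝ) := by
    rw [hlt, Real.exp_neg, Real.exp_log (by linarith)]
    rw [inv_div]
  have hden : 1 - Real.exp (-(lam * t)) = ((n : ℝ) - 2) / n := by
    rw [hexp]; field_simp
  have hn2 : (n : ℝ) - 2 ≠ 0 := by linarith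
  have hLval : L = ((n : ℝ) - 2) / lam := by
    rw [hL, hexp]
    field_simp
    ring
  rw [hLval]
  rw [div_div_eq_mul_div]
  field_simp
end
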